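/- The 3-dimensional ℂ-algebra N_{a²,0} (nonzero products: e₁e₁ = e₂, e₁e₃ = e₂, e₃e₁ = -e₂) has N_{a²,0}² one-dimensional, whereas N_{a,0}² (for the algebra with products e₁e₁ = e₂, e₁e₃ = e₁, e₃e₁ = -e₁) is two-dimensional; hence N_{a²,0} and N_{a,0} are not isomorphic. -/
import Mathlib

/-- Multiplication of N_{a²,0}: e₁e₁ = e₂, e₁e₃ = e₂, e₃e₁ = -e₂. -/
def mulNa20 (v w : Fin 3 → ℂ) : Fin 3 → ℂ :=
  ![0, v 0 * w 0 + (v 0 * w 2 - v 2 * w 0), 0]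

/-- Multiplication of N_{a,0}: e₁e₁ = e₂, e₁e₃ = e₁, e₃e₁ = -e₁. -/
def mulNa0 (v w : Fin 3 → ℂ) : Fin 3 → ℂ := ![v 0 * w 2 - v 2 * w 0, v 0 * w 0, 0]

/-- A², the span of all products of two elements. -/
noncomputable def sqSpan (m : (Fin 3 → ℂ) → (Fin 3 → ℂ) → (Fin 3 → ℂ)) : Submodule ℂ (Fin 3 → ℂ) :=
  Submodule.span ℂ {z | ∃ x y, z = m x y}

lemma sq20 : sqSpan mulNa20 = Submodule.span ℂ {(![0,1,0] : Fin 3 → ℂ)} := by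
  apply le_antisymm
  · rw [sqSpan, Submodule.span_le]
    rintro z ⟨x, y, rfl⟩
    refine Submodule.mem_span_singleton.2 ⟨x 0 * y 0 + (x 0 * y 2 - x 2 * y 0), ?_⟩
    funext i; fin_cases i <;> simp [mulNa20]
  · rw [Submodule.span_le]
    rintro z rfl
    apply Submodule.subset_span
    exact ⟨![1,0,0], ![1,0,0], by funext i; fin_cases i <;> simp [mulNa20]⟩

lemma fr20 : Module.finrank ℂ (sqSpan mulNa20) = 1 := by
  rw [sq20]
  apply finrank_span_singleton
  intro h
  have := congrFun h 1
  simp at this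

lemma sq0 : sqSpan mulNa0
    = Submodule.span ℂ (Set.range ![(![1,0,0] : Fin 3 → ℂ), ![0,1,0]]) := by
  apply le_antisymm
  · rw [sqSpan, Submodule.span_le]
    rintro z ⟨x, y, rfl⟩
    have : mulNa0 x y = (x 0 * y 2 - x 2 * y 0) • ![1,0,0] + (x 0 * y 0) • ![0,1,0] := by
      funext i; fin_cases i <;> simp [mulNa0]
    rw [this]
    exact Submodule.add_mem _
      (Submodule.smul_mem _ _ (Submodule.subset_span ⟨0, rfl⟩))
      (Submodule.smul_mem _ _ (Submodule.subset_span ⟨1, rfl⟩))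
  · rw [Submodule.span_le]
    rintro z ⟨i, rfl⟩
    apply Submodule.subset_span
    fin_cases i
    · exact ⟨![1,0,0], ![0,0,1], by funext j; fin_cases j <;> simp [mulNa0]⟩
    · exact ⟨![1,0,0], ![1,0,0], by funext j; fin_cases j <;> simp [mulNa0]⟩

lemma fr0 : Module.finrank ℂ (sqSpan mulNa0) = 2 := by
  rw [sq0]
  rw [finrank_span_eq_card (R := ℂ)]
  · simp
  · rw [LinearIndependent.pair_iff]
    intro s t h
    constructor
    · have := congrFun h 0; simpa using this
    · have := congrFun h 1; simpa using this

/-- N_{a²,0}² is one-dimensional, N_{a,0}² is two-dimensional,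
hence the algebras are not isomorphic. -/
theorem stmt_11 :
    Module.finrank ℂ (sqSpan mulNa20) = 1 ∧ Module.finrank ℂ (sqSpan mulNa0) = 2 ∧
    ¬ ∃ f : (Fin 3 → ℂ) ≃ₗ[ℂ] (Fin 3 → ℂ),
        ∀ x y, f (mulNa20 x y) = mulNa0 (f x) (f y) := by
  refine ⟨fr20, fr0, ?_⟩
  rintro ⟨f, hf⟩
  have hmap : (sqSpan mulNa20).map (f : (Fin 3 → ℂ) →ₗ[ℂ] (Fin 3 → ℂ)) = sqSpan mulNa0 := by
    rw [sqSpan, sqSpan, Submodule.map_span]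
    congr 1
    ext z
    constructor
    · rintro ⟨w, ⟨x, y, rfl⟩, rfl⟩
      exact ⟨f x, f y, hf x y⟩
    · rintro ⟨x, y, rfl⟩
      refine ⟨mulNa20 (f.symm x) (f.symm y), ⟨_, _, rfl⟩, ?_⟩
      simp only [LinearEquiv.coe_coe, hf, LinearEquiv.apply_symm_apply]
  have := LinearEquiv.finrank_map_eq f (sqSpan mulNa20)
  rw [hmap, fr20, fr0] at this
  exact absurd this (by norm_num)
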